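/- Let S be a finite set of n points in the plane and let K be a point such that for every nonzero vector v, the closed half-plane { x | ⟪v, x − K⟫ ≥ 0 } contains at least ⌈n/3⌉ points of S. Let F be a natural number with F < ⌈n/3⌉ and let N ⊆ S satisfy |S \ N| ≤ F. Then for every p ∈ N there exists q ∈ N with dist(p, K) ≤ dist(p, q). -/
import Mathlib


open scoped Classical
open RealInnerProductSpace

/-- If `K` is a centerpoint of `S` (every closed half-plane through `K` contains
at least `⌈n/3⌉` points of `S`), `F < ⌈n/3⌉`, and `N ⊆ S` omits at most `F`
points of `S`, then every `p ∈ N` has some `q ∈ N` with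
`dist(p, K) ≤ dist(p, q)`. -/
theorem centerpoint_gathering_bound
    (S : Finset (EuclideanSpace ℝ (Fin 2))) (K : EuclideanSpace ℝ (Fin 2))
    (hK : ∀ v : EuclideanSpace ℝ (Fin 2), v ≠ 0 →
      ⌈(S.card : ℚ) / 3⌉₊ ≤ (S.filter fun x => 0 ≤ ⟪v, x - K⟫).card)
    (F : ℕ) (hF : F < ⌈(S.card : ℚ) / 3⌉₊)
    (N : Finset (EuclideanSpace ℝ (Fin 2))) (hNS : N ⊆ S)
    (hNF : (S \ N).card ≤ F) :
    ∀ p ∈ N, ∃ q ∈ N, dist p K ≤ dist p q := by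
  intro p hp
  by_cases hKp : K - p = 0
  · refine ⟨p, hp, ?_⟩
    have : K = p := by rwa [sub_eq_zero] at hKp
    simp [this]
  · set v := K - p with hv
    have hcard := hK v hKp
    set T := S.filter fun x => 0 ≤ ⟪v, x - K⟫ with hT
    have hTS : T ⊆ S := Finset.filter_subset _ _
    -- find q ∈ T ∩ N
    have hne : (T ∩ N).Nonempty := by
      by_contra hemp
      rw [Finset.not_nonempty_iff_eq_empty] at hemp
      have hsub : T ⊆ S \ N := by
        intro x hx
        rw [Finset.mem_sdiff]
        refine ⟨hTS hx, fun hxN => ?_⟩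
        have : x ∈ T ∩ N := Finset.mem_inter.mpr ⟨hx, hxN⟩
        simp [hemp] at this
      have := Finset.card_le_card hsub
      omega
    obtain ⟨q, hq⟩ := hne
    rw [Finset.mem_inter] at hq
    refine ⟨q, hq.2, ?_⟩
    have hiq : 0 ≤ ⟪v, q - K⟫ := (Finset.mem_filter.mp hq.1).2
    have hdecomp : q - p = (q - K) + v := by rw [hv, sub_add_sub_cancel]
    have hsq : ‖v‖ ^ 2 ≤ ‖q - p‖ ^ 2 := by
      rw [hdecomp, norm_add_sq_real, real_inner_comm]
      nlinarith [norm_nonneg (q - K), sq_nonneg ‖q - K‖]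
    have h1 : dist p K = ‖v‖ := by rw [hv, dist_eq_norm']
    have h2 : dist p q = ‖q - p‖ := by rw [dist_eq_norm']
    rw [h1, h2]
    exact (pow_le_pow_iff_left₀ (norm_nonneg _) (norm_nonneg _) two_ne_zero).mp hsq
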